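/- Γ is satisfiable if and only if ν_ac(G(Γ)) = ν_s(G(Γ)). -/

import Mathlib

open SimpleGraph

/-- The subgraph of `G` consisting of those pairs in `s` that are actually edges of `G`. -/
def pairsSubgraph {V : Type*} (G : SimpleGraph V) (s : Set (V × V)) : G.Subgraph where
  verts := {v | ∃ a b, (G.Adj a b ∧ ((a, b) ∈ s ∨ (b, a) ∈ s)) ∧ (v = a ∨ v = b)}
  Adj a b := G.Adj a b ∧ ((a, b) ∈ s ∨ (b, a) ∈ s)
  adj_sub h := h.1
  edge_vert h := ⟨_, _, h, Or.inl rfl⟩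
  symm := ⟨fun _ _ h => ⟨h.1.symm, h.2.symm⟩⟩

/-- `M` is an induced matching in `G`: it is a matching, and `G(M)`, the subgraph of `G`
induced by the set `V(M)` of covered vertices (which is `M.verts` for a matching subgraph),
is `1`-regular, i.e. every vertex of `G(M)` has exactly one neighbour in `G(M)`. -/
def IsInducedMatching {V : Type*} (G : SimpleGraph V) (M : G.Subgraph) : Prop :=
  M.IsMatching ∧ ∀ v : M.verts, ∃! w : M.verts, (G.induce M.verts).Adj v w

/-- `M` is an acyclic matching in `G`: it is a matching and `G(M)` is a forest. -/
def IsAcyclicMatching {V : Type*} (G : SimpleGraph V) (M : G.Subgraph) : Prop :=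
  M.IsMatching ∧ (G.induce M.verts).IsAcyclic

/-- `M` is a uniquely restricted matching in `G`: it is a matching and it is the unique
perfect matching of `G(M)`, i.e. the unique matching of `G` covering exactly `M.verts`. -/
def IsURMatching {V : Type*} (G : SimpleGraph V) (M : G.Subgraph) : Prop :=
  M.IsMatching ∧ ∀ M' : G.Subgraph, M'.IsMatching → M'.verts = M.verts → M' = M

/-- The (ordinary) matching number `ν(G)`: the maximum cardinality of a matching in `G`. -/
noncomputable def nuMatch {V : Type*} (G : SimpleGraph V) : ℕ :=
  sSup {k : ℕ | ∃ M : G.Subgraph, M.IsMatching ∧ M.edgeSet.ncard = k}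

/-- The uniquely restricted matching number `ν_ur(G)`. -/
noncomputable def nuUR {V : Type*} (G : SimpleGraph V) : ℕ :=
  sSup {k : ℕ | ∃ M : G.Subgraph, IsURMatching G M ∧ M.edgeSet.ncard = k}

/-- The acyclic matching number `ν_ac(G)`. -/
noncomputable def nuAc {V : Type*} (G : SimpleGraph V) : ℕ :=
  sSup {k : ℕ | ∃ M : G.Subgraph, IsAcyclicMatching G M ∧ M.edgeSet.ncard = k}

/-- The induced (strong) matching number `ν_s(G)`. -/
noncomputable def nuS {V : Type*} (G : SimpleGraph V) : ℕ :=
  sSup {k : ℕ | ∃ M : G.Subgraph, IsInducedMatching G M ∧ M.edgeSet.ncard = k}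

/-- `cyc` is an `M`-alternating cycle in `G`: a cycle of `G` whose edges alternate between
edges of `M` and edges of `E(G) \ M`. -/
def IsAltCycle {V : Type*} (G : SimpleGraph V) (M : G.Subgraph) {v : V}
    (cyc : G.Walk v v) : Prop :=
  cyc.IsCycle ∧ cyc.toSubgraph.spanningCoe.IsAlternating M.spanningCoe

/-- Vertices of the graph `G(Γ)` for the SATISFIABILITY instance `Γ` with `n` variables and `m`
clauses: `Sum.inl (i, 0) = t_i`, `Sum.inl (i, 1) = f_i`, `Sum.inl (i, 2) = u_i` are the vertices
of the triangle `X_i`; `Sum.inr (j, none) = v_j`, and `Sum.inr (j, some l)` is the vertex of the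
clique `C_j` identified with the literal `l` (it is isolated unless `l` belongs to `c_j`, so that
the clique `C_j` effectively has `|c_j| + 1` vertices). A literal `(i, true)` is `x_i` and a
literal `(i, false)` is `¬x_i`. -/
abbrev SatV (n m : ℕ) : Type := (Fin n × Fin 3) ⊕ (Fin m × Option (Fin n × Bool))

/-- The base relation for `G(Γ)`: all edges inside each triangle `X_i`, all edges inside each
clique `C_j`, an edge from `f_i` to every vertex identified with the literal `x_i`, and an edge
from `t_i` to every vertex identified with the literal `¬x_i`. -/
def satRel {n m : ℕ} (c : Fin m → Finset (Fin n × Bool)) : SatV n m → SatV n m → Prop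
  | Sum.inl (i, k), Sum.inl (i', k') => i = i' ∧ k ≠ k'
  | Sum.inr (j, o), Sum.inr (j', o') =>
      j = j' ∧ o ≠ o' ∧ (∀ l, o = some l → l ∈ c j) ∧ (∀ l, o' = some l → l ∈ c j)
  | Sum.inl (i, k), Sum.inr (j, o) =>
      (k = 1 ∧ o = some (i, true) ∧ (i, true) ∈ c j) ∨
      (k = 0 ∧ o = some (i, false) ∧ (i, false) ∈ c j)
  | Sum.inr _, Sum.inl _ => False

/-- The graph `G(Γ)` built from the SATISFIABILITY instance `Γ` whose clauses are given by `c`. -/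
def satGraph {n m : ℕ} (c : Fin m → Finset (Fin n × Bool)) : SimpleGraph (SatV n m) :=
  SimpleGraph.fromRel (satRel c)

/-!
Every vertex of `G(Γ)` that is not isolated lies in one of the `n + m` cliques `X_i`, `C_j`,
and three vertices of `V(M)` in one clique would form a triangle in `G(M)`, which neither an
acyclic nor an induced matching allows. Hence `ν_ac(G(Γ))` and `ν_s(G(Γ))` are at most `n + m`.

Matching every `u_i` to `t_i` or `f_i` and every `v_j` to some literal of `c_j` gives an acyclic
matching of size `n + m`: ranking `u_i < t_i, f_i < literals < v_j`, every vertex of `G(M)` has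
at most one neighbour of no larger rank. It is induced as soon as the assignment behind the
choice of `t_i` or `f_i` makes every chosen literal true, so `ν_ac = ν_s` if `Γ` is satisfiable.

Conversely, an induced matching of size `n + m` covers exactly two vertices of every clique. In
`C_j` one of them is a literal vertex, whose unique `G(M)`-neighbour is the other one, so its
neighbour in the triangle of its variable is uncovered. Setting `x_i` true iff `f_i` is
uncovered therefore satisfies every clause.
-/

namespace SimpleGraph

variable {V : Type*} {G : SimpleGraph V}

theorem isAcyclic_of_forall_le_rank (f : V → ℕ)
    (h : ∀ ⦃v w w'⦄, G.Adj v w → G.Adj v w' → f w ≤ f v → f w' ≤ f v → w = w') :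
    G.IsAcyclic := by
  classical
  -- a vertex of maximal rank on a cycle has two distinct cycle neighbours of no larger rank
  intro u c hc
  obtain ⟨v, hv, hmax⟩ := c.support.toFinset.exists_max_image f ⟨u, by simp⟩
  rw [List.mem_toFinset] at hv
  obtain ⟨w, w', hww', hnbr⟩ := Set.ncard_eq_two.mp (hc.ncard_neighborSet_toSubgraph_eq_two hv)
  have hle : ∀ x ∈ c.toSubgraph.neighborSet v, G.Adj v x ∧ f x ≤ f v := fun x hx =>
    ⟨c.toSubgraph.adj_sub hx, hmax x (List.mem_toFinset.mpr (c.mem_verts_toSubgraph.mp hx.snd_mem))⟩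
  obtain ⟨hw, hfw⟩ := hle w (by simp [hnbr])
  obtain ⟨hw', hfw'⟩ := hle w' (by simp [hnbr])
  exact hww' (h hw hw' hfw hfw')

theorem IsClique.card_le_two_of_cliqueFree_induce {S : Set V} {t : Finset V}
    (ht : G.IsClique (t : Set V)) (htS : (t : Set V) ⊆ S) (hS : (G.induce S).CliqueFree 3) :
    t.card ≤ 2 := by
  classical
  by_contra! h
  obtain ⟨a, ha, b, hb, d, hd, hab, had, hbd⟩ := Finset.two_lt_card.mp h
  refine hS ({⟨a, htS ha⟩, ⟨b, htS hb⟩, ⟨d, htS hd⟩} : Finset S)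
    (is3Clique_triple_iff.mpr ⟨?_, ?_, ?_⟩)
  · exact ht ha hb hab
  · exact ht ha hd had
  · exact ht hb hd hbd

theorem Subgraph.IsMatching.ncard_verts [Finite V] {M : G.Subgraph} (hM : M.IsMatching) :
    M.verts.ncard = 2 * M.edgeSet.ncard := by
  classical
  have := Fintype.ofFinite V
  have hdeg : ∀ v : M.verts, M.coe.degree v = 1 := fun v => by
    rw [Subgraph.coe_degree]
    convert isMatching_iff_forall_degree.mp hM v v.2
  have hsum : Fintype.card M.verts = 2 * M.coe.edgeFinset.card := by
    rw [← M.coe.sum_degrees_eq_twice_card_edges, Fintype.card_eq_sum_ones]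
    exact Finset.sum_congr rfl fun v _ => by convert (hdeg v).symm
  rw [Set.ncard_eq_toFinset_card', Set.toFinset_card, hsum, ← Subgraph.image_coe_edgeSet_coe,
    Set.ncard_image_of_injective _ (Sym2.map.injective Subtype.val_injective),
    Set.ncard_eq_toFinset_card', Set.toFinset_card, card_edgeSet]

section iSupSubgraphOfAdj

variable {ι : Type*} {a b : ι → V} (h : ∀ i, G.Adj (a i) (b i))

theorem isMatching_iSup_subgraphOfAdj
    (hd : Pairwise fun i j => Disjoint ({a i, b i} : Set V) {a j, b j}) :
    (⨆ i, G.subgraphOfAdj (h i)).IsMatching :=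
  Subgraph.IsMatching.iSup (fun i => .subgraphOfAdj (h i))
    (by simpa only [support_subgraphOfAdj] using hd)

theorem ncard_edgeSet_iSup_subgraphOfAdj
    (hd : Pairwise fun i j => Disjoint ({a i, b i} : Set V) {a j, b j}) :
    (⨆ i, G.subgraphOfAdj (h i)).edgeSet.ncard = Nat.card ι := by
  simp only [Subgraph.edgeSet_iSup, edgeSet_subgraphOfAdj, Set.iUnion_singleton_eq_range]
  refine Set.ncard_range_of_injective fun i j hij => ?_
  by_contra hne
  have : a i ∈ ({a j, b j} : Set V) := by
    rcases Sym2.eq_iff.mp hij with ⟨h1, -⟩ | ⟨h1, -⟩ <;> simp [h1]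
  exact Set.disjoint_left.mp (hd hne) (by simp) this

end iSupSubgraphOfAdj

theorem exists_isInducedMatching_ncard_eq_nuS [Finite V] (G : SimpleGraph V) :
    ∃ M : G.Subgraph, IsInducedMatching G M ∧ M.edgeSet.ncard = nuS G := by
  let S := {k | ∃ M : G.Subgraph, IsInducedMatching G M ∧ M.edgeSet.ncard = k}
  have hbot : IsInducedMatching G ⊥ :=
    ⟨fun _ hv => absurd hv (by simp), fun ⟨_, hv⟩ => absurd hv (by simp)⟩
  have hbdd : BddAbove S := by
    refine ⟨Nat.card (Sym2 V), ?_⟩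
    rintro _ ⟨M, -, rfl⟩
    exact Set.ncard_le_card _
  exact Nat.sSup_mem (s := S) ⟨0, ⊥, hbot, by simp⟩ hbdd

end SimpleGraph

theorem IsInducedMatching.cliqueFree_three_induce {V : Type*} {G : SimpleGraph V}
    {M : G.Subgraph} (hM : IsInducedMatching G M) : (G.induce M.verts).CliqueFree 3 := by
  classical
  intro s hs
  obtain ⟨a, b, d, hab, had, hbd, -⟩ := SimpleGraph.is3Clique_iff.mp hs
  obtain ⟨_, -, huniq⟩ := hM.2 a
  exact hbd.ne ((huniq b hab).trans (huniq d had).symm)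

namespace SatGraph

open Finset

variable {n m : ℕ} {c : Fin m → Finset (Fin n × Bool)}

@[simp] lemma adj_inl_inl {i i' : Fin n} {k k' : Fin 3} :
    (satGraph c).Adj (.inl (i, k)) (.inl (i', k')) ↔ i = i' ∧ k ≠ k' := by
  simp only [satGraph, fromRel_adj, satRel]
  grind

@[simp] lemma adj_inr_inr {j j' : Fin m} {o o' : Option (Fin n × Bool)} :
    (satGraph c).Adj (.inr (j, o)) (.inr (j', o')) ↔
      j = j' ∧ o ≠ o' ∧ (∀ l, o = some l → l ∈ c j) ∧ (∀ l, o' = some l → l ∈ c j) := by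
  simp only [satGraph, fromRel_adj, satRel]
  grind

@[simp] lemma adj_inl_inr {i : Fin n} {k : Fin 3} {j : Fin m} {o : Option (Fin n × Bool)} :
    (satGraph c).Adj (.inl (i, k)) (.inr (j, o)) ↔
      (k = 1 ∧ o = some (i, true) ∧ (i, true) ∈ c j) ∨
      (k = 0 ∧ o = some (i, false) ∧ (i, false) ∈ c j) := by
  simp [satGraph, satRel]

@[simp] lemma adj_inr_inl {i : Fin n} {k : Fin 3} {j : Fin m} {o : Option (Fin n × Bool)} :
    (satGraph c).Adj (.inr (j, o)) (.inl (i, k)) ↔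
      (k = 1 ∧ o = some (i, true) ∧ (i, true) ∈ c j) ∨
      (k = 0 ∧ o = some (i, false) ∧ (i, false) ∈ c j) := by
  rw [adj_comm, adj_inl_inr]

lemma mem_of_adj_literal {j : Fin m} {l : Fin n × Bool} {x : SatV n m}
    (h : (satGraph c).Adj (.inr (j, some l)) x) : l ∈ c j := by
  rcases x with ⟨i, k⟩ | ⟨j', o⟩ <;> simp at h <;> grind

/-- `f_i` for the literal `x_i` and `t_i` for `¬x_i`. -/
def literalNeighbor (l : Fin n × Bool) : SatV n m := .inl (l.1, if l.2 then 1 else 0)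

lemma adj_literalNeighbor {j : Fin m} {l : Fin n × Bool} (hl : l ∈ c j) :
    (satGraph c).Adj (.inr (j, some l)) (literalNeighbor l) := by
  obtain ⟨i, _ | _⟩ := l <;> simp [literalNeighbor, hl]

/-- `Sum.inl i` stands for the triangle `X_i` and `Sum.inr j` for the clique `C_j`. -/
def gadget : SatV n m → Fin n ⊕ Fin m := Sum.map Prod.fst Prod.fst

lemma adj_of_gadget_eq {a b : SatV n m} (hne : a ≠ b) (h : gadget a = gadget b)
    (ha : ∃ x, (satGraph c).Adj a x) (hb : ∃ x, (satGraph c).Adj b x) :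
    (satGraph c).Adj a b := by
  rcases a with ⟨i, k⟩ | ⟨j, o⟩ <;> rcases b with ⟨i', k'⟩ | ⟨j', o'⟩ <;>
    simp only [gadget, Sum.map_inl, Sum.map_inr, Sum.inl.injEq, Sum.inr.injEq, reduceCtorEq] at h
  · subst h
    simpa using hne
  · subst h
    obtain ⟨x, hx⟩ := ha
    obtain ⟨y, hy⟩ := hb
    rw [adj_inr_inr]
    exact ⟨rfl, by simpa using hne, by rintro l rfl; exact mem_of_adj_literal hx,
      by rintro l rfl; exact mem_of_adj_literal hy⟩

section Counting

variable {M : (satGraph c).Subgraph}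

open Classical in
noncomputable def coveredIn (M : (satGraph c).Subgraph) (r : Fin n ⊕ Fin m) :
    Finset (SatV n m) :=
  {v | v ∈ M.verts ∧ gadget v = r}

lemma mem_coveredIn {r : Fin n ⊕ Fin m} {v : SatV n m} :
    v ∈ coveredIn M r ↔ v ∈ M.verts ∧ gadget v = r := by
  simp [coveredIn]

lemma isClique_coveredIn (hM : M.IsMatching) (r : Fin n ⊕ Fin m) :
    (satGraph c).IsClique (coveredIn M r : Set (SatV n m)) := by
  have hnbr : ∀ v ∈ M.verts, ∃ x, (satGraph c).Adj v x := fun v hv =>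
    let ⟨x, hx, _⟩ := hM hv
    ⟨x, M.adj_sub hx⟩
  intro a ha b hb hab
  rw [Finset.mem_coe, mem_coveredIn] at ha hb
  exact adj_of_gadget_eq hab (ha.2.trans hb.2.symm) (hnbr a ha.1) (hnbr b hb.1)

lemma card_coveredIn_le (hM : M.IsMatching)
    (h3 : ((satGraph c).induce M.verts).CliqueFree 3) (r : Fin n ⊕ Fin m) :
    #(coveredIn M r) ≤ 2 :=
  (isClique_coveredIn hM r).card_le_two_of_cliqueFree_induce
    (fun _ hv => (mem_coveredIn.mp hv).1) h3

lemma sum_card_coveredIn (M : (satGraph c).Subgraph) :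
    ∑ r, #(coveredIn M r) = M.verts.ncard := by
  classical
  rw [Set.ncard_eq_toFinset_card',
    card_eq_sum_card_fiberwise (f := gadget) (t := univ) (by simp)]
  congr! 2 with r
  ext v
  simp [mem_coveredIn]

lemma ncard_edgeSet_le (hM : M.IsMatching) (h3 : ((satGraph c).induce M.verts).CliqueFree 3) :
    M.edgeSet.ncard ≤ n + m := by
  have hsum := sum_le_sum fun r (_ : r ∈ univ) => card_coveredIn_le hM h3 r
  rw [sum_card_coveredIn, hM.ncard_verts] at hsum
  simp at hsum
  omega

lemma card_coveredIn_eq_two (hM : M.IsMatching)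
    (h3 : ((satGraph c).induce M.verts).CliqueFree 3) (hcard : M.edgeSet.ncard = n + m)
    (r : Fin n ⊕ Fin m) : #(coveredIn M r) = 2 := by
  have hsum : ∑ r, #(coveredIn M r) = ∑ _r : Fin n ⊕ Fin m, 2 := by
    rw [sum_card_coveredIn, hM.ncard_verts, hcard]
    simp [mul_comm]
  exact (sum_eq_sum_iff_of_le fun r _ => card_coveredIn_le hM h3 r).mp hsum r (mem_univ r)

end Counting

section Construction

variable (t : Fin n → Bool) (w : Fin m → Fin n × Bool)

def matchedEdge : Fin n ⊕ Fin m → SatV n m × SatV n m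
  | .inl i => (.inl (i, 2), .inl (i, if t i then 0 else 1))
  | .inr j => (.inr (j, none), .inr (j, some (w j)))

variable {t w}

@[simp] lemma gadget_matchedEdge_fst (x : Fin n ⊕ Fin m) :
    gadget (matchedEdge t w x).1 = x := by
  cases x <;> rfl

@[simp] lemma gadget_matchedEdge_snd (x : Fin n ⊕ Fin m) :
    gadget (matchedEdge t w x).2 = x := by
  cases x <;> rfl

lemma adj_matchedEdge (hw : ∀ j, w j ∈ c j) (x : Fin n ⊕ Fin m) :
    (satGraph c).Adj (matchedEdge t w x).1 (matchedEdge t w x).2 := by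
  rcases x with i | j
  · simp only [matchedEdge, adj_inl_inl, true_and]
    split <;> decide
  · simp [matchedEdge, hw]

lemma pairwise_disjoint_matchedEdge :
    Pairwise fun x y => Disjoint ({(matchedEdge t w x).1, (matchedEdge t w x).2} : Set (SatV n m))
      {(matchedEdge t w y).1, (matchedEdge t w y).2} := by
  have hsub : ∀ x, ({(matchedEdge t w x).1, (matchedEdge t w x).2} : Set (SatV n m)) ⊆
      gadget ⁻¹' {x} := by
    simp [Set.insert_subset_iff]
  exact fun x y hxy => ((Set.disjoint_singleton.mpr hxy).preimage gadget).mono (hsub x) (hsub y)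

variable (t) in
def matchingOf (hw : ∀ j, w j ∈ c j) : (satGraph c).Subgraph :=
  ⨆ x, (satGraph c).subgraphOfAdj (adj_matchedEdge (t := t) hw x)

variable (hw : ∀ j, w j ∈ c j)

lemma isMatching_matchingOf : (matchingOf t hw).IsMatching :=
  isMatching_iSup_subgraphOfAdj _ pairwise_disjoint_matchedEdge

lemma ncard_edgeSet_matchingOf : (matchingOf t hw).edgeSet.ncard = n + m := by
  rw [matchingOf, ncard_edgeSet_iSup_subgraphOfAdj _ pairwise_disjoint_matchedEdge]
  simp

lemma mem_verts_matchingOf {v : SatV n m} :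
    v ∈ (matchingOf t hw).verts ↔
      v = (matchedEdge t w (gadget v)).1 ∨ v = (matchedEdge t w (gadget v)).2 := by
  simp only [matchingOf, Subgraph.verts_iSup, subgraphOfAdj_verts, Set.mem_iUnion,
    Set.mem_insert_iff, Set.mem_singleton_iff]
  constructor
  · rintro ⟨x, rfl | rfl⟩ <;> simp
  · exact fun h => ⟨_, h⟩

lemma adj_matchingOf {a b : SatV n m} :
    (matchingOf t hw).Adj a b ↔
      ∃ x, s((matchedEdge t w x).1, (matchedEdge t w x).2) = s(a, b) := by
  simp [matchingOf]

def rank : SatV n m → ℕ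
  | .inl (_, k) => if k = 2 then 0 else 1
  | .inr (_, some _) => 2
  | .inr (_, none) => 3

variable (w) in
def parent : SatV n m → SatV n m
  | .inl (i, _) => .inl (i, 2)
  | .inr (j, none) => .inr (j, some (w j))
  | .inr (_, some l) => literalNeighbor l

lemma eq_parent_of_adj {a b : SatV n m} (ha : a ∈ (matchingOf t hw).verts)
    (hb : b ∈ (matchingOf t hw).verts) (hab : (satGraph c).Adj a b) (hr : rank b ≤ rank a) :
    b = parent w a := by
  rw [mem_verts_matchingOf] at ha hb
  rcases a with ⟨i, k⟩ | ⟨j, o⟩ <;> rcases b with ⟨i', k'⟩ | ⟨j', o'⟩ <;>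
    simp only [gadget, matchedEdge, Sum.map_inl, Sum.map_inr, Sum.inl.injEq, Sum.inr.injEq,
      Prod.mk.injEq, true_and] at ha hb <;>
    rcases ha with rfl | rfl <;> rcases hb with rfl | rfl <;>
    simp_all [rank, parent, literalNeighbor]
  all_goals grind

lemma isAcyclic_matchingOf : ((satGraph c).induce (matchingOf t hw).verts).IsAcyclic := by
  refine isAcyclic_of_forall_le_rank (fun v => rank v.1) ?_
  rintro ⟨a, ha⟩ ⟨b, hb⟩ ⟨b', hb'⟩ hab hab' hr hr'
  exact Subtype.ext <|
    (eq_parent_of_adj hw ha hb hab hr).trans (eq_parent_of_adj hw ha hb' hab' hr').symm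

lemma adj_matchingOf_of_adj (ht : ∀ j, t (w j).1 = (w j).2) {a b : SatV n m}
    (ha : a ∈ (matchingOf t hw).verts) (hb : b ∈ (matchingOf t hw).verts)
    (hab : (satGraph c).Adj a b) : (matchingOf t hw).Adj a b := by
  rw [adj_matchingOf]
  refine ⟨gadget a, ?_⟩
  rw [mem_verts_matchingOf] at ha hb
  rcases a with ⟨i, k⟩ | ⟨j, o⟩ <;> rcases b with ⟨i', k'⟩ | ⟨j', o'⟩ <;>
    simp only [gadget, matchedEdge, Sum.map_inl, Sum.map_inr, Sum.inl.injEq, Sum.inr.injEq,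
      Prod.mk.injEq, true_and] at ha hb <;>
    rcases ha with rfl | rfl <;> rcases hb with rfl | rfl <;> simp_all [gadget, matchedEdge]
  all_goals grind

lemma isInducedMatching_matchingOf (ht : ∀ j, t (w j).1 = (w j).2) :
    IsInducedMatching (satGraph c) (matchingOf t hw) := by
  refine ⟨isMatching_matchingOf hw, fun ⟨v, hv⟩ => ?_⟩
  obtain ⟨u, hvu, huniq⟩ := isMatching_matchingOf hw hv
  exact ⟨⟨u, hvu.snd_mem⟩, hvu.adj_sub, fun ⟨u', hu'⟩ hvu' =>
    Subtype.ext (huniq u' (adj_matchingOf_of_adj hw ht hv hu' hvu'))⟩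

end Construction

section Extraction

variable {M : (satGraph c).Subgraph}

lemma exists_literal_of_isInducedMatching (hM : IsInducedMatching (satGraph c) M) {j : Fin m}
    (h2 : #(coveredIn M (.inr j)) = 2) : ∃ l ∈ c j, literalNeighbor l ∉ M.verts := by
  obtain ⟨b, hb, hbv⟩ := exists_mem_ne (by omega : 1 < #(coveredIn M (.inr j))) (.inr (j, none))
  obtain ⟨b', hb', hb'b⟩ := exists_mem_ne (by omega : 1 < #(coveredIn M (.inr j))) b
  have hbb' := isClique_coveredIn hM.1 _ hb hb' hb'b.symm
  rw [mem_coveredIn] at hb hb'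
  rcases b with ⟨i, k⟩ | ⟨j₀, _ | l⟩
  · simp [gadget] at hb
  · simp_all [gadget]
  · simp only [gadget, Sum.map_inr, Sum.inr.injEq] at hb
    obtain ⟨hb, rfl⟩ := hb
    have hl := mem_of_adj_literal hbb'
    refine ⟨l, hl, fun hn => ?_⟩
    have hnb' : literalNeighbor l = b' := congrArg Subtype.val <|
      (hM.2 ⟨_, hb⟩).unique (y₁ := ⟨_, hn⟩) (y₂ := ⟨_, hb'.1⟩) (adj_literalNeighbor hl) hbb'
    simp [← hnb', literalNeighbor, gadget] at hb'

lemma inl_one_mem_verts_of_inl_zero_notMem {i : Fin n} (h2 : #(coveredIn M (.inl i)) = 2)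
    (ht : (.inl (i, 0) : SatV n m) ∉ M.verts) : (.inl (i, 1) : SatV n m) ∈ M.verts := by
  classical
  have hsub : coveredIn M (.inl i) ⊆ {.inl (i, 1), .inl (i, 2)} := by
    intro v hv
    rw [mem_coveredIn] at hv
    rcases v with ⟨i', k⟩ | ⟨j, o⟩ <;> simp [gadget] at hv
    obtain ⟨hv, rfl⟩ := hv
    fin_cases k <;> simp_all
  have heq := eq_of_subset_of_card_le hsub (by rw [h2]; exact card_le_two)
  exact (mem_coveredIn.mp (heq ▸ mem_insert_self _ _ : _ ∈ coveredIn M (.inl i))).1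

theorem exists_satisfying_of_isInducedMatching (hM : IsInducedMatching (satGraph c) M)
    (hcard : M.edgeSet.ncard = n + m) : ∃ t : Fin n → Bool, ∀ j, ∃ l ∈ c j, t l.1 = l.2 := by
  classical
  have h2 := card_coveredIn_eq_two hM.1 hM.cliqueFree_three_induce hcard
  refine ⟨fun i => decide ((.inl (i, 1) : SatV n m) ∉ M.verts), fun j => ?_⟩
  obtain ⟨⟨i, _ | _⟩, hl, hn⟩ := exists_literal_of_isInducedMatching hM (h2 (.inr j))
  · exact ⟨_, hl, by simpa using inl_one_mem_verts_of_inl_zero_notMem (h2 (.inl i)) hn⟩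
  · exact ⟨_, hl, by simpa [literalNeighbor] using hn⟩

end Extraction

theorem nuAc_satGraph {w : Fin m → Fin n × Bool} (hw : ∀ j, w j ∈ c j) :
    nuAc (satGraph c) = n + m := by
  refine IsGreatest.csSup_eq
    ⟨⟨matchingOf (fun _ => true) hw, ?_, ncard_edgeSet_matchingOf hw⟩, ?_⟩
  · exact ⟨isMatching_matchingOf hw, isAcyclic_matchingOf hw⟩
  · rintro _ ⟨M, hM, rfl⟩
    exact ncard_edgeSet_le hM.1 (hM.2.cliqueFree le_rfl)

theorem nuS_satGraph {t : Fin n → Bool} {w : Fin m → Fin n × Bool} (hw : ∀ j, w j ∈ c j)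
    (ht : ∀ j, t (w j).1 = (w j).2) : nuS (satGraph c) = n + m := by
  refine IsGreatest.csSup_eq
    ⟨⟨matchingOf t hw, isInducedMatching_matchingOf hw ht, ncard_edgeSet_matchingOf hw⟩, ?_⟩
  rintro _ ⟨M, hM, rfl⟩
  exact ncard_edgeSet_le hM.1 hM.cliqueFree_three_induce

end SatGraph

theorem satisfiable_iff_nuAc_eq_nuS_general {n m : ℕ} (c : Fin m → Finset (Fin n × Bool))
    (hsize : ∀ j, (c j).card = 2 ∨ (c j).card = 3) :
    (∃ t : Fin n → Bool, ∀ j, ∃ l ∈ c j, t l.1 = l.2) ↔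
      nuAc (satGraph c) = nuS (satGraph c) := by
  have hne : ∀ j, ∃ l, l ∈ c j := fun j =>
    Finset.card_pos.mp (by rcases hsize j with h | h <;> omega)
  choose w hw using hne
  rw [SatGraph.nuAc_satGraph hw]
  constructor
  · rintro ⟨t, ht⟩
    choose w' hw' hsat using ht
    exact (SatGraph.nuS_satGraph hw' hsat).symm
  · intro h
    obtain ⟨M, hM, hcard⟩ := (satGraph c).exists_isInducedMatching_ncard_eq_nuS
    exact SatGraph.exists_satisfying_of_isInducedMatching hM (hcard.trans h.symm)

/-- `Γ` is satisfiable if and only if `ν_ac(G(Γ)) = ν_s(G(Γ))`. -/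
theorem satisfiable_iff_nuAc_eq_nuS {n m : ℕ} (c : Fin m → Finset (Fin n × Bool))
    (hsize : ∀ j, (c j).card = 2 ∨ (c j).card = 3)
    (hpos : ∀ i : Fin n, (Finset.univ.filter fun j => (i, true) ∈ c j).card ≤ 2)
    (hneg : ∀ i : Fin n, (Finset.univ.filter fun j => (i, false) ∈ c j).card ≤ 1)
    (hcon : ∀ j, ∀ i : Fin n, ¬((i, true) ∈ c j ∧ (i, false) ∈ c j)) :
    (∃ t : Fin n → Bool, ∀ j, ∃ l ∈ c j, t l.1 = l.2) ↔
      nuAc (satGraph c) = nuS (satGraph c) :=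
  satisfiable_iff_nuAc_eq_nuS_general c hsize
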